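/- arXiv:1907.11874 — 3 statements merged into one kernel-verified Lean document; each statement's English description precedes it below -/
import Mathlib

section
/- Equality E(G) = 2√m holds if and only if G is a complete bipartite graph together with (possibly zero) isolated vertices. -/
/-!
Let `μ` be the adjacency eigenvalues, so `∑ μᵢ = tr A = 0` and `∑ μᵢ² = tr A² = 2m`. Adding
`(∑ μᵢ)² = 0` to `(∑ |μᵢ|)²` gives `(∑ |μᵢ|)² = 2 ∑ μᵢ² + ∑_{i ≠ j} (|μᵢμⱼ| + μᵢμⱼ)`, so
`E(G) = 2√m` exactly when no two eigenvalues have a positive product; as they sum to `0`, this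
means at most two of them are nonzero, i.e. `rank A ≤ 2`.

If `u ~ v`, the columns of `u` and `v` are independent, so `rank A ≤ 2` makes every column `w`
equal to `A v w • col u + A u w • col v`. Read entrywise, `G` is complete bipartite between the
neighbourhoods of `v` and `u` with all other vertices isolated: a blow-up (`comap`) of
`K₂ + K₁ = oneEdgeG 3`, whose vertex classes can be matched with those of `K_{r,s} + tK₁`. Conversely the adjacency matrix of
such a blow-up is a submatrix of the rank-2 adjacency matrix of `K₂ + K₁`.
-/

open SimpleGraph Finset

/-- Adjacency matrix over `ℝ` (classical decidability). -/
noncomputable def adjMatR {n : ℕ} (G : SimpleGraph (Fin n)) : Matrix (Fin n) (Fin n) ℝ :=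
  @SimpleGraph.adjMatrix ℝ (Fin n) G (Classical.decRel _) _ _

lemma adjMatR_isHermitian {n : ℕ} (G : SimpleGraph (Fin n)) : (adjMatR G).IsHermitian := by
  have h : (adjMatR G).IsSymm := @SimpleGraph.isSymm_adjMatrix ℝ (Fin n) G (Classical.decRel _) _ _
  simpa [Matrix.IsHermitian, Matrix.conjTranspose_eq_transpose_of_trivial, Matrix.IsSymm] using h

/-- Multiset of adjacency eigenvalues (with multiplicity). -/
noncomputable def specMS {n : ℕ} (G : SimpleGraph (Fin n)) : Multiset ℝ :=
  Finset.univ.val.map (adjMatR_isHermitian G).eigenvalues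

/-- `i`-th largest adjacency eigenvalue (0-indexed). -/
noncomputable def eigval {n : ℕ} (G : SimpleGraph (Fin n)) (i : ℕ) : ℝ :=
  ((specMS G).sort (· ≥ ·)).getD i 0

/-- Graph energy. -/
noncomputable def energy {n : ℕ} (G : SimpleGraph (Fin n)) : ℝ :=
  ((specMS G).map (fun x => |x|)).sum

/-- ℓ¹ spectral distance. -/
noncomputable def specDist {n : ℕ} (G H : SimpleGraph (Fin n)) : ℝ :=
  ∑ i ∈ Finset.range n, |eigval G i - eigval H i|

/-- number of edges -/
noncomputable def numEdges {n : ℕ} (G : SimpleGraph (Fin n)) : ℕ := G.edgeSet.ncard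

/-- `K_2 + (n-2)K_1`: one edge plus isolated vertices. -/
def oneEdgeG (n : ℕ) : SimpleGraph (Fin n) :=
  SimpleGraph.fromRel (fun u v => (u : ℕ) = 0 ∧ (v : ℕ) = 1)

/-- `P_3 + (n-3)K_1`: a path on 3 vertices plus isolated vertices. -/
def path3G (n : ℕ) : SimpleGraph (Fin n) :=
  SimpleGraph.fromRel (fun u v => ((u : ℕ) = 0 ∧ (v : ℕ) = 1) ∨ ((u : ℕ) = 1 ∧ (v : ℕ) = 2))

/-- Complete bipartite graph `K_{a,b}` on `Fin (a+b)`. -/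
def compBip (a b : ℕ) : SimpleGraph (Fin (a + b)) :=
  SimpleGraph.fromRel (fun u v => (u : ℕ) < a ∧ a ≤ (v : ℕ))

/-- `K_{r,s} + tK_1`: complete bipartite plus `t` isolated vertices. -/
def compBipPlus (r s t : ℕ) : SimpleGraph (Fin (r + s + t)) :=
  SimpleGraph.fromRel (fun u v => (u : ℕ) < r ∧ r ≤ (v : ℕ) ∧ (v : ℕ) < r + s)

/-- `K_1 + K_{n-1}`: an isolated vertex plus a complete graph. -/
def k1PlusComplete (n : ℕ) : SimpleGraph (Fin n) :=
  SimpleGraph.fromRel (fun u v => (u : ℕ) ≠ 0 ∧ (v : ℕ) ≠ 0)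

/-- `(K_1 + K_2) ∇ (n-3)K_1`: join of `K_1 + K_2` with `n-3` isolated vertices. -/
def k1k2JoinEmpty (n : ℕ) : SimpleGraph (Fin n) :=
  SimpleGraph.fromRel (fun u v =>
    ((u : ℕ) = 1 ∧ (v : ℕ) = 2) ∨ ((u : ℕ) < 3 ∧ 3 ≤ (v : ℕ)))

section EigenvalueSums

variable {ι : Type*} [Fintype ι]

theorem sq_sum_abs_eq_two_mul_sum_sq_iff_pairwise (μ : ι → ℝ) (h : ∑ i, μ i = 0) :
    (∑ i, |μ i|) ^ 2 = 2 * ∑ i, μ i ^ 2 ↔ Pairwise fun i j => μ i * μ j ≤ 0 := by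
  classical
  set g : ι → ι → ℝ := fun i j => |μ i * μ j| + μ i * μ j
  have hg : ∀ i j, 0 ≤ g i j := fun i j => neg_le_iff_add_nonneg'.mp (neg_abs_le _)
  have expand : (∑ i, |μ i|) ^ 2 = 2 * ∑ i, μ i ^ 2 + ∑ i, ∑ j ∈ univ.erase i, g i j := by
    have : (∑ i, |μ i|) ^ 2 = ∑ i, ∑ j, g i j := by
      simp only [g, sum_add_distrib, ← sum_mul_sum, abs_mul, h, ← sq]
      ring
    rw [this, mul_sum, ← sum_add_distrib]
    refine sum_congr rfl fun i _ => ?_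
    rw [← add_sum_erase _ _ (mem_univ i)]
    simp only [g, ← sq, abs_sq]
    ring
  have hsum : ∀ i, 0 ≤ ∑ j ∈ univ.erase i, g i j := fun i => sum_nonneg fun j _ => hg i j
  rw [expand, add_eq_left, sum_eq_zero_iff_of_nonneg fun i _ => hsum i]
  simp only [mem_univ, true_implies, sum_eq_zero_iff_of_nonneg fun j _ => hg _ j, mem_erase,
    and_true, g, add_eq_zero_iff_eq_neg, abs_eq_neg_self, ne_comm, Pairwise]

theorem pairwise_mul_nonpos_iff_card_ne_zero_le_two (μ : ι → ℝ) (h : ∑ i, μ i = 0) :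
    (Pairwise fun i j => μ i * μ j ≤ 0) ↔ Fintype.card {i // μ i ≠ 0} ≤ 2 := by
  constructor
  · intro hμ
    by_contra! hc
    obtain ⟨⟨a, ha⟩, ⟨b, hb⟩, ⟨c, hc⟩, hab, hac, hbc⟩ := Fintype.two_lt_card_iff.mp hc
    have hab := (hμ (Subtype.coe_ne_coe.mpr hab)).lt_of_ne (mul_ne_zero ha hb)
    have hac := (hμ (Subtype.coe_ne_coe.mpr hac)).lt_of_ne (mul_ne_zero ha hc)
    have hbc := hμ (Subtype.coe_ne_coe.mpr hbc)
    nlinarith [mul_pos_of_neg_of_neg hab hac, sq_nonneg (μ a)]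
  · intro hcard i j hij
    by_contra! hpos
    have hi : μ i ≠ 0 := left_ne_zero_of_mul hpos.ne'
    have hj : μ j ≠ 0 := right_ne_zero_of_mul hpos.ne'
    have rest : ∀ k, k ≠ i ∧ k ≠ j → μ k = 0 := by
      rintro k ⟨hki, hkj⟩
      by_contra hk
      refine hcard.not_gt (Fintype.two_lt_card_iff.mpr ⟨⟨i, hi⟩, ⟨j, hj⟩, ⟨k, hk⟩, ?_, ?_, ?_⟩) <;>
        simp [Subtype.ext_iff, hij, hki.symm, hkj.symm]
    have hji : μ j = -μ i := by linarith [Fintype.sum_eq_add i j hij rest ▸ h]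
    nlinarith [hji ▸ hpos, sq_nonneg (μ i)]

end EigenvalueSums

namespace Matrix

theorem IsHermitian.trace_mul_self {n 𝕜 : Type*} [Fintype n] [DecidableEq n] [RCLike 𝕜]
    {A : Matrix n n 𝕜} (hA : A.IsHermitian) :
    (A * A).trace = ∑ i, (hA.eigenvalues i : 𝕜) ^ 2 := by
  conv_lhs => rw [hA.spectral_theorem, ← map_mul, Unitary.conjStarAlgAut_apply, trace_mul_cycle,
    Unitary.coe_star_mul_self, one_mul, diagonal_mul_diagonal, trace_diagonal]
  simp [sq]

theorem col_mem_span_pair_of_rank_le_two {K m n : Type*} [Field K] [Fintype m] [Fintype n]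
    {A : Matrix m n K} (hA : A.rank ≤ 2) {u v : n}
    (huv : LinearIndependent K ![A.col u, A.col v]) (w : n) :
    A.col w ∈ Submodule.span K {A.col u, A.col v} := by
  have hle : Submodule.span K {A.col u, A.col v} ≤ Submodule.span K (Set.range A.col) :=
    Submodule.span_mono (Set.pair_subset ⟨u, rfl⟩ ⟨v, rfl⟩)
  have hrank : Module.finrank K (Submodule.span K {A.col u, A.col v}) = 2 := by
    have := finrank_span_eq_card huv
    rwa [range_cons_cons_empty, Fintype.card_fin] at this
  rw [Submodule.eq_of_le_of_finrank_le hle (by rwa [hrank, ← rank_eq_finrank_span_cols])]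
  exact Submodule.subset_span ⟨w, rfl⟩

end Matrix

open Matrix

namespace SimpleGraph

variable {V : Type*}

theorem trace_adjMatrix_mul_self [Fintype V] [DecidableEq V] (G : SimpleGraph V)
    [DecidableRel G.Adj] {α : Type*} [NonAssocSemiring α] :
    (G.adjMatrix α * G.adjMatrix α).trace = 2 * #G.edgeFinset := by
  simp only [trace, Matrix.diag_apply, adjMatrix_mul_self_apply_self]
  rw [← Nat.cast_sum, sum_degrees_eq_twice_card_edges, Nat.cast_mul, Nat.cast_ofNat]

theorem rank_adjMatrix_comap_le {R C : Type*} [CommSemiring R] [StrongRankCondition R]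
    [Fintype V] [Fintype C] (H : SimpleGraph C) [DecidableRel H.Adj] (f : V → C)
    [DecidableRel (H.comap f).Adj] :
    ((H.comap f).adjMatrix R).rank ≤ (H.adjMatrix R).rank := by
  have : (H.comap f).adjMatrix R = (H.adjMatrix R).submatrix f f := by
    ext a b
    simp [adjMatrix_apply]
  rw [this]
  exact rank_submatrix_le _ _ _

theorem nonempty_iso_comap_of_card_fiber_eq {W C : Type*} [Finite V] [Finite W]
    (H : SimpleGraph C) {f : V → C} {g : W → C}
    (h : ∀ c, Nat.card {a // f a = c} = Nat.card {b // g b = c}) :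
    Nonempty (H.comap f ≃g H.comap g) :=
  ⟨⟨Equiv.ofFiberEquiv fun c => (Finite.card_eq.mp (h c)).some,
    by simp only [comap_adj, Equiv.ofFiberEquiv_map, implies_true]⟩⟩

variable {G : SimpleGraph V} [DecidableRel G.Adj] {u v : V}

theorem linearIndependent_adjMatrix_col_pair (huv : G.Adj u v) :
    LinearIndependent ℝ ![(G.adjMatrix ℝ).col u, (G.adjMatrix ℝ).col v] := by
  refine LinearIndependent.pair_iff.mpr fun a b hab => ⟨?_, ?_⟩
  · simpa [huv.symm] using congrFun hab v
  · simpa [huv] using congrFun hab u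

theorem adjMatrix_apply_eq_of_rank_le_two [Fintype V] (hA : (G.adjMatrix ℝ).rank ≤ 2)
    (huv : G.Adj u v) (x w : V) :
    G.adjMatrix ℝ x w =
      G.adjMatrix ℝ v w * G.adjMatrix ℝ x u + G.adjMatrix ℝ u w * G.adjMatrix ℝ x v := by
  obtain ⟨a, b, hab⟩ := Submodule.mem_span_pair.mp
    (col_mem_span_pair_of_rank_le_two hA (linearIndependent_adjMatrix_col_pair huv) w)
  have ha : a = G.adjMatrix ℝ v w := by simpa [huv.symm] using congrFun hab v
  have hb : b = G.adjMatrix ℝ u w := by simpa [huv] using congrFun hab u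
  have hx := (congrFun hab x).symm
  simp only [Pi.add_apply, Pi.smul_apply, col_apply, smul_eq_mul] at hx
  rw [hx, ha, hb]

theorem not_adj_and_adj_of_rank_le_two [Fintype V] (hA : (G.adjMatrix ℝ).rank ≤ 2)
    (huv : G.Adj u v) (w : V) : ¬ (G.Adj v w ∧ G.Adj u w) := by
  rintro ⟨hv, hu⟩
  have := adjMatrix_apply_eq_of_rank_le_two hA huv w w
  norm_num [hv, hu, hv.symm, hu.symm] at this

theorem adj_iff_of_rank_le_two [Fintype V] (hA : (G.adjMatrix ℝ).rank ≤ 2)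
    (huv : G.Adj u v) (x w : V) :
    G.Adj x w ↔ G.Adj v w ∧ G.Adj u x ∨ G.Adj u w ∧ G.Adj v x := by
  have h := adjMatrix_apply_eq_of_rank_le_two hA huv x w
  have hvu := not_adj_and_adj_of_rank_le_two hA huv w
  simp only [adjMatrix_apply, G.adj_comm x u, G.adj_comm x v] at h
  split_ifs at h <;> simp_all

theorem eq_comap_oneEdgeG_of_rank_le_two [Fintype V] (hA : (G.adjMatrix ℝ).rank ≤ 2)
    (huv : G.Adj u v) :
    G = (oneEdgeG 3).comap fun w => if G.Adj v w then 0 else if G.Adj u w then 1 else 2 := by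
  ext x w
  have hx := not_adj_and_adj_of_rank_le_two hA huv x
  have hw := not_adj_and_adj_of_rank_le_two hA huv w
  rw [adj_iff_of_rank_le_two hA huv, comap_adj, oneEdgeG, fromRel_adj]
  split_ifs <;> simp_all

theorem rank_adjMatrix_le_two_of_eq_comap [Fintype V] {f : V → Fin 3}
    (hG : G = (oneEdgeG 3).comap f) : (G.adjMatrix ℝ).rank ≤ 2 := by
  classical
  subst hG
  have hK : (oneEdgeG 3).adjMatrix ℝ = (!![1, 0; 0, 1; 0, 0] : Matrix (Fin 3) (Fin 2) ℝ) *
      (!![0, 1, 0; 1, 0, 0] : Matrix (Fin 2) (Fin 3) ℝ) := by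
    ext i j
    fin_cases i <;> fin_cases j <;> simp [adjMatrix_apply, oneEdgeG]
  calc _ ≤ ((oneEdgeG 3).adjMatrix ℝ).rank := rank_adjMatrix_comap_le _ f
    _ ≤ 2 := hK ▸ (rank_mul_le_left _ _).trans (rank_le_width _)

end SimpleGraph

open SimpleGraph

def compBipPlusClass (r s : ℕ) {N : ℕ} (a : Fin N) : Fin 3 :=
  if (a : ℕ) < r then 0 else if (a : ℕ) < r + s then 1 else 2

theorem compBipPlus_eq_comap (r s t : ℕ) :
    compBipPlus r s t = (oneEdgeG 3).comap (compBipPlusClass r s) := by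
  ext a b
  simp only [compBipPlus, oneEdgeG, fromRel_adj, comap_adj]
  grind [compBipPlusClass]

theorem Fin.natCard_subtype_le_and_lt {N lo hi : ℕ} (h : hi ≤ N) :
    Nat.card {a : Fin N // lo ≤ (a : ℕ) ∧ (a : ℕ) < hi} = hi - lo := by
  rw [← Set.ncard_Ico_nat lo hi, ← Nat.card_coe_set_eq]
  exact Nat.card_congr ⟨fun a => ⟨a.1, a.2⟩, fun k => ⟨⟨k, by have := k.2.2; omega⟩, k.2⟩,
    fun _ => rfl, fun _ => rfl⟩

theorem natCard_compBipPlusClass_fiber (r s t : ℕ) (c : Fin 3) :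
    Nat.card {a : Fin (r + s + t) // compBipPlusClass r s a = c} = ![r, s, t] c := by
  have fiber (lo hi : ℕ) (h : hi ≤ r + s + t)
      (hc : ∀ a : Fin (r + s + t), compBipPlusClass r s a = c ↔ lo ≤ (a : ℕ) ∧ (a : ℕ) < hi) :
      Nat.card {a : Fin (r + s + t) // compBipPlusClass r s a = c} = hi - lo := by
    rw [Nat.card_congr (Equiv.subtypeEquivRight hc), Fin.natCard_subtype_le_and_lt h]
  fin_cases c
  · simpa using fiber 0 r (by omega) fun a => by grind [compBipPlusClass]
  · simpa using fiber r (r + s) (by omega) fun a => by grind [compBipPlusClass]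
  · simpa using fiber (r + s) (r + s + t) le_rfl fun a => by grind [compBipPlusClass]

theorem nonempty_iso_compBipPlus_of_eq_comap {V : Type*} [Finite V] {G : SimpleGraph V}
    {f : V → Fin 3} (hG : G = (oneEdgeG 3).comap f) :
    Nonempty (G ≃g compBipPlus (Nat.card {a // f a = 0}) (Nat.card {a // f a = 1})
      (Nat.card {a // f a = 2})) := by
  rw [hG, compBipPlus_eq_comap]
  refine nonempty_iso_comap_of_card_fiber_eq _ fun c => ?_
  rw [natCard_compBipPlusClass_fiber]
  fin_cases c <;> rfl

section Energy

variable {n : ℕ} (G : SimpleGraph (Fin n))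

theorem adjMatR_eq [DecidableRel G.Adj] : adjMatR G = G.adjMatrix ℝ := by
  unfold adjMatR
  congr

theorem energy_eq_sum_abs_eigenvalues :
    energy G = ∑ i, |(adjMatR_isHermitian G).eigenvalues i| := by
  rw [energy, specMS, Multiset.map_map]
  rfl

theorem numEdges_eq_card_edgeFinset [DecidableRel G.Adj] : numEdges G = #G.edgeFinset := by
  rw [numEdges, ← Set.ncard_coe_finset, coe_edgeFinset]

theorem energy_eq_two_sqrt_iff_rank_le_two :
    energy G = 2 * √(numEdges G) ↔ (adjMatR G).rank ≤ 2 := by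
  classical
  set hA := adjMatR_isHermitian G
  have h0 : ∑ i, hA.eigenvalues i = 0 := by
    simpa [adjMatR_eq, trace_adjMatrix] using hA.trace_eq_sum_eigenvalues.symm
  have h2 : ∑ i, hA.eigenvalues i ^ 2 = 2 * numEdges G := by
    simpa [adjMatR_eq, trace_adjMatrix_mul_self, numEdges_eq_card_edgeFinset] using
      hA.trace_mul_self.symm
  rw [hA.rank_eq_card_non_zero_eigs, ← pairwise_mul_nonpos_iff_card_ne_zero_le_two _ h0,
    ← sq_sum_abs_eq_two_mul_sum_sq_iff_pairwise _ h0, h2, energy_eq_sum_abs_eigenvalues,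
    ← sq_eq_sq₀ (by positivity) (by positivity), mul_pow, Real.sq_sqrt (by positivity)]
  ring_nf

end Energy

theorem energy_eq_two_sqrt_iff (n : ℕ) (G : SimpleGraph (Fin n)) (hm : 1 ≤ numEdges G) :
    energy G = 2 * Real.sqrt (numEdges G) ↔
      ∃ r s t : ℕ, 0 < r ∧ 0 < s ∧ Nonempty (G ≃g compBipPlus r s t) := by
  classical
  rw [energy_eq_two_sqrt_iff_rank_le_two, adjMatR_eq]
  constructor
  · intro hA
    obtain ⟨u, v, huv⟩ := ne_bot_iff_exists_adj.mp <| edgeSet_nonempty.mp <|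
      Set.nonempty_of_ncard_ne_zero (s := G.edgeSet) (by unfold numEdges at hm; omega)
    exact ⟨_, _, _, Finite.card_pos_iff.mpr ⟨⟨u, by simp [huv.symm]⟩⟩,
      Finite.card_pos_iff.mpr ⟨⟨v, by simp [huv]⟩⟩,
      nonempty_iso_compBipPlus_of_eq_comap (eq_comap_oneEdgeG_of_rank_le_two hA huv)⟩
  · rintro ⟨r, s, t, -, -, ⟨e⟩⟩
    rw [compBipPlus_eq_comap] at e
    exact rank_adjMatrix_le_two_of_eq_comap (f := compBipPlusClass r s ∘ e)
      (by ext a b; exact e.map_adj_iff.symm)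
end

section
/- Let G be a graph on n vertices without isolated vertices. Then the second largest adjacency eigenvalue λ_2(G) equals −1 if and only if G is a complete graph with at least two vertices. -/
open SimpleGraph Finset

/-!
Let `λ₁ ≥ ⋯ ≥ λₙ` be the adjacency eigenvalues, so that `∑ λᵢ = tr A = 0` and
`∑ λᵢ² = tr A² = 2|E| ≤ n(n-1)`, with equality only for the complete graph.
If `λ₂ = -1`, then `λᵢ ≤ -1` for `i ≥ 2` and hence `λ₁ ≥ n - 1`, which forces
`∑ λᵢ² ≥ (n-1)² + (n-1) = n(n-1)`. Conversely `A(Kₙ) + I = J` with `J² = nJ`, so every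
eigenvalue of `Kₙ` is `-1` or `n - 1`, and a zero trace allows only one of them to be `n - 1`.
-/

namespace Matrix

namespace IsHermitian

variable {𝕜 ι : Type*} [RCLike 𝕜] [Fintype ι] [DecidableEq ι] {A : Matrix ι ι 𝕜}

lemma trace_mul_self_eq_sum_sq_eigenvalues (hA : A.IsHermitian) :
    (A * A).trace = ∑ i, (hA.eigenvalues i : 𝕜) ^ 2 := by
  conv_lhs => rw [hA.spectral_theorem, ← map_mul, Unitary.conjStarAlgAut_apply, trace_mul_cycle,
    Unitary.coe_star_mul_self, one_mul, diagonal_mul_diagonal, trace_diagonal]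
  simp [sq]

noncomputable def sortedEigenvalues (hA : A.IsHermitian) : List ℝ :=
  (univ.val.map hA.eigenvalues).sort (· ≥ ·)

lemma pairwise_sortedEigenvalues (hA : A.IsHermitian) : hA.sortedEigenvalues.Pairwise (· ≥ ·) :=
  Multiset.pairwise_sort _ _

lemma coe_sortedEigenvalues (hA : A.IsHermitian) :
    (hA.sortedEigenvalues : Multiset ℝ) = univ.val.map hA.eigenvalues :=
  Multiset.sort_eq _ _

lemma length_sortedEigenvalues (hA : A.IsHermitian) :
    hA.sortedEigenvalues.length = Fintype.card ι := by
  simp [sortedEigenvalues, Multiset.length_sort]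

lemma mem_sortedEigenvalues (hA : A.IsHermitian) {x : ℝ} :
    x ∈ hA.sortedEigenvalues ↔ ∃ i, hA.eigenvalues i = x := by
  simp [← Multiset.mem_coe, coe_sortedEigenvalues]

lemma sum_sortedEigenvalues (hA : A.IsHermitian) :
    (hA.sortedEigenvalues.sum : 𝕜) = A.trace := by
  rw [← Multiset.sum_coe, coe_sortedEigenvalues, hA.trace_eq_sum_eigenvalues]
  simp

lemma sum_sq_sortedEigenvalues (hA : A.IsHermitian) :
    ((hA.sortedEigenvalues.map fun x : ℝ ↦ x ^ 2).sum : 𝕜) = (A * A).trace := by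
  rw [← Multiset.sum_coe, ← Multiset.map_coe, coe_sortedEigenvalues,
    hA.trace_mul_self_eq_sum_sq_eigenvalues]
  simp

end IsHermitian

lemma of_one_mul_self {R ι : Type*} [Semiring R] [Fintype ι] :
    (of fun _ _ ↦ (1 : R) : Matrix ι ι R) * of (fun _ _ ↦ 1) =
      (Fintype.card ι : R) • of fun _ _ ↦ 1 := by
  ext i j
  simp [mul_apply]

lemma eq_zero_or_eq_of_mul_self_eq_smul {K ι : Type*} [Field K] [Fintype ι]
    {M : Matrix ι ι K} {c μ : K} {v : ι → K} (hM : M * M = c • M) (hv : v ≠ 0)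
    (hMv : M *ᵥ v = μ • v) : μ = 0 ∨ μ = c := by
  have : (μ * μ) • v = (c * μ) • v := by
    rw [← smul_smul, ← hMv, ← mulVec_smul, ← hMv, mulVec_mulVec, hM, smul_mulVec, hMv,
      smul_smul]
  rcases mul_eq_mul_right_iff.mp (smul_left_injective K hv this) with h | h
  · exact .inr h
  · exact .inl h

end Matrix

lemma length_mul_pred_le_sum_sq_of_getD_one_eq_neg_one {l : List ℝ} (hl : l.Pairwise (· ≥ ·))
    (hsum : l.sum = 0) (h1 : l.getD 1 0 = -1) :
    (l.length : ℝ) * (l.length - 1) ≤ (l.map fun x ↦ x ^ 2).sum := by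
  rcases l with _ | ⟨a, _ | ⟨b, t⟩⟩
  · simp at h1
  · simp at h1
  obtain rfl : b = -1 := h1
  simp only [List.pairwise_cons] at hl
  obtain ⟨-, ht, -⟩ := hl
  have hts : t.sum ≤ t.length * (-1) := by simpa using List.sum_le_card_nsmul t (-1) ht
  have hsq : ∀ y ∈ t.map fun x ↦ x ^ 2, (1 : ℝ) ≤ y := by
    simp only [List.mem_map]
    rintro _ ⟨x, hx, rfl⟩
    nlinarith [ht x hx]
  have htsq : (t.length : ℝ) ≤ (t.map fun x ↦ x ^ 2).sum := by
    simpa using List.card_nsmul_le_sum _ 1 hsq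
  have ha : a = -(-1 + t.sum) := by
    simp only [List.sum_cons] at hsum
    linarith
  simp only [List.length_cons, List.map_cons, List.sum_cons, Nat.cast_add, Nat.cast_one]
  nlinarith

lemma getD_one_eq_neg_one_of_forall_mem {l : List ℝ} (hl : l.Pairwise (· ≥ ·))
    (hsum : l.sum = 0) (hlen : 2 ≤ l.length) (hmem : ∀ x ∈ l, x = -1 ∨ x = l.length - 1) :
    l.getD 1 0 = -1 := by
  rcases l with _ | ⟨a, _ | ⟨b, t⟩⟩
  · simp at hlen
  · simp at hlen
  simp only [List.pairwise_cons] at hl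
  obtain ⟨hab, -, -⟩ := hl
  have ht : ∀ x ∈ t, -1 ≤ x := fun x hx ↦ by
    rcases hmem x (by simp [hx]) with rfl | rfl
    · rfl
    · simp only [List.length_cons, Nat.cast_add, Nat.cast_one]
      linarith [t.length.cast_nonneg (α := ℝ)]
  have hts : t.length * (-1) ≤ t.sum := by simpa using List.card_nsmul_le_sum t (-1) ht
  refine (hmem b (by simp)).resolve_right fun hb ↦ ?_
  have ha := hab b (by simp)
  simp only [List.length_cons, Nat.cast_add, Nat.cast_one] at hb
  simp only [List.sum_cons] at hsum
  linarith

section adjMatR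

open Matrix

variable {n : ℕ}

lemma trace_adjMatR_mul_self (G : SimpleGraph (Fin n)) :
    (adjMatR G * adjMatR G).trace = ∑ u, ∑ v, adjMatR G u v := by
  simp only [trace, Matrix.diag, mul_apply]
  refine Finset.sum_congr rfl fun u _ ↦ Finset.sum_congr rfl fun v _ ↦ ?_
  by_cases h : G.Adj u v <;> simp [adjMatR, adjMatrix_apply, h, G.adj_comm v u]

lemma sum_adjMatR_top : ∑ u, ∑ v, adjMatR (⊤ : SimpleGraph (Fin n)) u v = n * (n - 1) := by
  simp [adjMatR, adjMatrix_apply, Finset.sum_ite, ← ne_eq, Finset.filter_ne]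
  cases n <;> simp

lemma sum_adjMatR_strictMono :
    StrictMono fun G : SimpleGraph (Fin n) ↦ ∑ u, ∑ v, adjMatR G u v := by
  intro G H hGH
  have hle (u v : Fin n) : adjMatR G u v ≤ adjMatR H u v := by
    by_cases h : G.Adj u v
    · simp [adjMatR, adjMatrix_apply, h, hGH.le h]
    · simp [adjMatR, adjMatrix_apply, h, ite_nonneg]
  obtain ⟨u, v, hH, hG⟩ : ∃ u v, H.Adj u v ∧ ¬G.Adj u v := by
    by_contra! h
    exact hGH.not_ge fun u v ↦ h u v
  refine Finset.sum_lt_sum (fun u _ ↦ Finset.sum_le_sum fun v _ ↦ hle u v)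
    ⟨u, mem_univ u, Finset.sum_lt_sum (fun v _ ↦ hle u v) ⟨v, mem_univ v, ?_⟩⟩
  simp [adjMatR, adjMatrix_apply, hH, hG]

lemma eq_top_of_le_sum_adjMatR {G : SimpleGraph (Fin n)}
    (h : (n : ℝ) * (n - 1) ≤ ∑ u, ∑ v, adjMatR G u v) : G = ⊤ := by
  by_contra hG
  have := sum_adjMatR_strictMono (lt_top_iff_ne_top.2 hG)
  simp only [sum_adjMatR_top] at this
  linarith

lemma adjMatR_top_add_one : adjMatR (⊤ : SimpleGraph (Fin n)) + 1 = of fun _ _ ↦ 1 := by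
  ext i j
  by_cases h : i = j <;> simp [adjMatR, adjMatrix_apply, one_apply, h]

lemma eigenvalues_adjMatR_top (i : Fin n) :
    (adjMatR_isHermitian ⊤).eigenvalues i = -1 ∨
      (adjMatR_isHermitian ⊤).eigenvalues i = n - 1 := by
  have hA := adjMatR_isHermitian (⊤ : SimpleGraph (Fin n))
  have hv := (WithLp.ofLp_eq_zero 2).ne.2 <| hA.eigenvectorBasis.orthonormal.ne_zero i
  have hJv : (adjMatR ⊤ + 1) *ᵥ hA.eigenvectorBasis i =
      (hA.eigenvalues i + 1) • hA.eigenvectorBasis i := by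
    rw [add_mulVec, hA.mulVec_eigenvectorBasis, one_mulVec, add_smul, one_smul]
    rfl
  rw [adjMatR_top_add_one] at hJv
  exact (eq_zero_or_eq_of_mul_self_eq_smul of_one_mul_self hv hJv).imp
    (fun h ↦ by linarith) (fun h ↦ by rw [Fintype.card_fin] at h; linarith)

lemma eigval_eq_getD (G : SimpleGraph (Fin n)) (i : ℕ) :
    eigval G i = (adjMatR_isHermitian G).sortedEigenvalues.getD i 0 :=
  rfl

lemma length_sortedEigenvalues_adjMatR (G : SimpleGraph (Fin n)) :
    (adjMatR_isHermitian G).sortedEigenvalues.length = n := by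
  simp [IsHermitian.length_sortedEigenvalues]

lemma sum_sortedEigenvalues_adjMatR (G : SimpleGraph (Fin n)) :
    (adjMatR_isHermitian G).sortedEigenvalues.sum = 0 := by
  simpa [adjMatR, trace_adjMatrix] using (adjMatR_isHermitian G).sum_sortedEigenvalues (𝕜 := ℝ)

lemma sum_sq_sortedEigenvalues_adjMatR (G : SimpleGraph (Fin n)) :
    ((adjMatR_isHermitian G).sortedEigenvalues.map fun x ↦ x ^ 2).sum =
      ∑ u, ∑ v, adjMatR G u v := by
  simpa [trace_adjMatR_mul_self] using
    (adjMatR_isHermitian G).sum_sq_sortedEigenvalues (𝕜 := ℝ)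

end adjMatR

theorem secondEig_eq_neg_one_iff_general (n : ℕ) (hn : 2 ≤ n) (G : SimpleGraph (Fin n)) :
    eigval G 1 = -1 ↔ G = (⊤ : SimpleGraph (Fin n)) := by
  rw [eigval_eq_getD]
  constructor
  · intro h1
    have hsq := length_mul_pred_le_sum_sq_of_getD_one_eq_neg_one
      (adjMatR_isHermitian G).pairwise_sortedEigenvalues (sum_sortedEigenvalues_adjMatR G) h1
    rw [length_sortedEigenvalues_adjMatR, sum_sq_sortedEigenvalues_adjMatR] at hsq
    exact eq_top_of_le_sum_adjMatR hsq
  · rintro rfl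
    refine getD_one_eq_neg_one_of_forall_mem (adjMatR_isHermitian ⊤).pairwise_sortedEigenvalues
      (sum_sortedEigenvalues_adjMatR ⊤) (length_sortedEigenvalues_adjMatR ⊤ ▸ hn)
      fun x hx ↦ ?_
    obtain ⟨i, rfl⟩ := (adjMatR_isHermitian ⊤).mem_sortedEigenvalues.1 hx
    rw [length_sortedEigenvalues_adjMatR]
    exact eigenvalues_adjMatR_top i

theorem secondEig_eq_neg_one_iff (n : ℕ) (hn : 2 ≤ n) (G : SimpleGraph (Fin n))
    (h : ∀ v, ∃ w, G.Adj v w) :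
    eigval G 1 = -1 ↔ G = (⊤ : SimpleGraph (Fin n)) :=
  secondEig_eq_neg_one_iff_general n hn G
end

section
/- Let G be a graph on n vertices without isolated vertices. Then λ_2(G) = 0 if and only if G is a complete k-partite graph for some 2 ≤ k ≤ n−1. -/
/-!
As `λ₁ ≥ λ₂`, `λ₂ ≤ 0` says that at most one eigenvalue is positive, i.e. that the adjacency form
`xᵀAx` is positive definite on no plane, and `0 ≤ λ₂` says that two eigenvalues are nonnegative.
For a complete multipartite graph `xᵀAx = (∑ xᵢ)² - ∑_P (∑_{i ∈ P} xᵢ)²` is nonpositive on the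
hyperplane `∑ xᵢ = 0`, two vertices of one part give a kernel vector and an edge gives a positive
eigenvalue. Conversely, if non-adjacency is not transitive there are `w₁ ~ w₂` and `v` adjacent to
neither; with a neighbour `t` of `v`, the form is positive definite on the span of `e_{w₁} + e_{w₂}`
and `2e_v + e_t`. Finally `k < n` because `0` is an eigenvalue while `A(Kₙ) = J - I` is invertible.
-/

open SimpleGraph Finset

open Matrix

lemma List.two_le_countP_iff_getD_one_mem {α : Type*} [LinearOrder α] {s : Set α}
    (hs : IsUpperSet s) [DecidablePred (· ∈ s)] {l : List α} (hl : l.Pairwise (· ≥ ·))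
    (hlen : 2 ≤ l.length) (d : α) :
    2 ≤ l.countP (· ∈ s) ↔ l.getD 1 d ∈ s := by
  match l, hl, hlen with
  | a :: b :: t, hl, _ =>
    have hab : b ≤ a := List.rel_of_pairwise_cons hl (by simp)
    have hbt : ∀ x ∈ t, x ≤ b := fun x hx ↦
      List.rel_of_pairwise_cons (List.pairwise_cons.mp hl).2 hx
    simp only [List.countP_cons, List.getD_cons_succ, List.getD_cons_zero, decide_eq_true_eq]
    by_cases hb : b ∈ s
    · simp [hb, hs hab hb]
    · have ht : t.countP (· ∈ s) = 0 :=
        List.countP_eq_zero.mpr fun x hx hxs ↦ hb (hs (hbt x hx) (by simpa using hxs))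
      by_cases ha : a ∈ s <;> simp [ht, hb, ha]

lemma LinearMap.exists_smul_add_smul_eq_zero {M K : Type*} [Field K] [AddCommGroup M]
    [Module K M] (φ : M →ₗ[K] K) (x y : M) :
    ∃ a b : K, (a, b) ≠ 0 ∧ φ (a • x + b • y) = 0 := by
  by_cases hx : φ x = 0
  · exact ⟨1, 0, by simp, by simp [hx]⟩
  · refine ⟨-φ y, φ x, by simp [hx], ?_⟩
    simp only [map_add, map_smul, smul_eq_mul]
    ring

lemma Matrix.dotProduct_mulVec_smul_add_smul {ι R : Type*} [Fintype ι] [CommRing R]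
    (A : Matrix ι ι R) (x y : ι → R) (a b : R) :
    (a • x + b • y) ⬝ᵥ A *ᵥ (a • x + b • y) =
      a ^ 2 * (x ⬝ᵥ A *ᵥ x) + a * b * (x ⬝ᵥ A *ᵥ y + y ⬝ᵥ A *ᵥ x) + b ^ 2 * (y ⬝ᵥ A *ᵥ y) := by
  simp only [add_dotProduct, dotProduct_add, mulVec_add, mulVec_smul, smul_dotProduct,
    dotProduct_smul, smul_eq_mul]
  ring

lemma Matrix.IsHermitian.det_eq_zero_iff {ι 𝕜 : Type*} [Fintype ι] [DecidableEq ι] [RCLike 𝕜]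
    {A : Matrix ι ι 𝕜} (hA : A.IsHermitian) : A.det = 0 ↔ ∃ i, hA.eigenvalues i = 0 := by
  simp [hA.det_eq_prod_eigenvalues, Finset.prod_eq_zero_iff]

lemma Function.Surjective.card_lt_iff_not_injective {α β : Type*} [Fintype α] [Fintype β]
    {f : α → β} (hf : Function.Surjective f) :
    Fintype.card β < Fintype.card α ↔ ¬ Function.Injective f :=
  ⟨fun h hinj ↦ (h.trans_le (Fintype.card_le_of_injective f hinj)).false,
    Fintype.card_lt_of_surjective_not_injective f hf⟩

namespace Matrix

variable {ι : Type*} [Fintype ι]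

def PosDefOnSpan (A : Matrix ι ι ℝ) (x y : ι → ℝ) : Prop :=
  ∀ a b : ℝ, (a, b) ≠ 0 → 0 < (a • x + b • y) ⬝ᵥ A *ᵥ (a • x + b • y)

lemma not_posDefOnSpan_of_nonpos_on_ker {A : Matrix ι ι ℝ} (φ : (ι → ℝ) →ₗ[ℝ] ℝ)
    (hφ : ∀ z, φ z = 0 → z ⬝ᵥ A *ᵥ z ≤ 0) (x y : ι → ℝ) : ¬ A.PosDefOnSpan x y := fun h ↦ by
  obtain ⟨a, b, hab, hker⟩ := φ.exists_smul_add_smul_eq_zero x y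
  exact (h a b hab).not_ge (hφ _ hker)

namespace IsHermitian

variable [DecidableEq ι] {A : Matrix ι ι ℝ} (hA : A.IsHermitian)

lemma dotProduct_mulVec_self_eq_sum (x : ι → ℝ) :
    x ⬝ᵥ A *ᵥ x = ∑ i, hA.eigenvalues i * (⇑(hA.eigenvectorBasis i) ⬝ᵥ x) ^ 2 := by
  set U : Matrix ι ι ℝ := (hA.eigenvectorUnitary : Matrix ι ι ℝ)
  have hxU : x ᵥ* U = fun i ↦ ⇑(hA.eigenvectorBasis i) ⬝ᵥ x := by
    ext i
    simp [U, vecMul, dotProduct, mul_comm]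
  have hUx : star U *ᵥ x = fun i ↦ ⇑(hA.eigenvectorBasis i) ⬝ᵥ x := by
    rw [star_eq_conjTranspose, conjTranspose_eq_transpose_of_trivial, mulVec_transpose, hxU]
  conv_lhs => rw [hA.spectral_theorem, Unitary.conjStarAlgAut_apply]
  rw [← mulVec_mulVec, ← mulVec_mulVec, dotProduct_mulVec, hxU, hUx]
  simp [dotProduct, mulVec_diagonal, sq, mul_comm, mul_left_comm]

lemma dotProduct_eigenvectorBasis (i j : ι) :
    ⇑(hA.eigenvectorBasis i) ⬝ᵥ ⇑(hA.eigenvectorBasis j) = if i = j then 1 else 0 := by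
  have h := orthonormal_iff_ite.mp hA.eigenvectorBasis.orthonormal i j
  rwa [EuclideanSpace.inner_eq_star_dotProduct, star_trivial, dotProduct_comm] at h

lemma dotProduct_mulVec_self_nonpos {x : ι → ℝ}
    (h : ∀ i, hA.eigenvalues i ≤ 0 ∨ ⇑(hA.eigenvectorBasis i) ⬝ᵥ x = 0) :
    x ⬝ᵥ A *ᵥ x ≤ 0 := by
  rw [hA.dotProduct_mulVec_self_eq_sum]
  refine Finset.sum_nonpos fun i _ ↦ ?_
  rcases h i with hi | hi
  · exact mul_nonpos_of_nonpos_of_nonneg hi (sq_nonneg _)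
  · simp [hi]

lemma exists_eigenvalues_pos {x : ι → ℝ} (hx : 0 < x ⬝ᵥ A *ᵥ x) :
    ∃ i, 0 < hA.eigenvalues i := by
  by_contra! h
  exact hx.not_ge (hA.dotProduct_mulVec_self_nonpos fun i ↦ .inl (h i))

lemma posDefOnSpan_eigenvectorBasis {i j : ι} (hij : i ≠ j) (hi : 0 < hA.eigenvalues i)
    (hj : 0 < hA.eigenvalues j) :
    A.PosDefOnSpan (hA.eigenvectorBasis i) (hA.eigenvectorBasis j) := by
  intro a b hab
  have hcoord (k : ι) : ⇑(hA.eigenvectorBasis k) ⬝ᵥ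
      (a • ⇑(hA.eigenvectorBasis i) + b • ⇑(hA.eigenvectorBasis j)) =
        (if k = i then a else 0) + (if k = j then b else 0) := by
    simp [dotProduct_add, dotProduct_smul, hA.dotProduct_eigenvectorBasis]
  rw [hA.dotProduct_mulVec_self_eq_sum, Fintype.sum_eq_add i j hij fun k hk ↦ by
    simp [hcoord, hk.1, hk.2]]
  simp only [hcoord, if_pos, if_neg hij, if_neg hij.symm, add_zero, zero_add]
  rcases not_and_or.mp (mt Prod.mk_eq_zero.mpr hab) with ha | hb
  · have := mul_nonneg hj.le (sq_nonneg b)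
    have := mul_pos hi (sq_pos_of_ne_zero ha)
    linarith
  · have := mul_nonneg hi.le (sq_nonneg a)
    have := mul_pos hj (sq_pos_of_ne_zero hb)
    linarith

/-- If at most one eigenvalue `λ_{i₀}` is positive, the form is nonpositive on the hyperplane
orthogonal to its eigenvector, and every plane meets that hyperplane. -/
lemma exists_eigenvalues_pos_pair_of_posDefOnSpan {x y : ι → ℝ} (h : A.PosDefOnSpan x y) :
    ∃ i j, i ≠ j ∧ 0 < hA.eigenvalues i ∧ 0 < hA.eigenvalues j := by
  by_contra! hpair
  by_cases hpos : ∃ i₀, 0 < hA.eigenvalues i₀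
  · obtain ⟨i₀, hi₀⟩ := hpos
    refine not_posDefOnSpan_of_nonpos_on_ker (dotProductBilin ℝ ℝ ⇑(hA.eigenvectorBasis i₀))
      (fun z hz ↦ hA.dotProduct_mulVec_self_nonpos fun i ↦ ?_) x y h
    by_cases hi : i = i₀
    · exact .inr (hi ▸ hz)
    · exact .inl (hpair i₀ i (Ne.symm hi) hi₀)
  · push Not at hpos
    exact not_posDefOnSpan_of_nonpos_on_ker 0
      (fun z _ ↦ hA.dotProduct_mulVec_self_nonpos fun i ↦ .inl (hpos i)) x y h

end IsHermitian

end Matrix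

namespace SimpleGraph

variable {V : Type*} {G : SimpleGraph V}

lemma IsCompleteMultipartite.exists_surjective_fin [Finite V] (hG : G.IsCompleteMultipartite) :
    ∃ (k : ℕ) (f : V → Fin k), Function.Surjective f ∧ ∀ u v, G.Adj u v ↔ f u ≠ f v := by
  let e := Finite.equivFin (Quotient hG.setoid)
  refine ⟨_, e ∘ Quotient.mk hG.setoid, e.surjective.comp Quotient.mk_surjective, fun u v ↦ ?_⟩
  rw [Function.comp_apply, Function.comp_apply, e.injective.ne_iff, Ne, Quotient.eq]
  exact not_not.symm

variable [Fintype V]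

lemma det_adjMatrix_top_ne_zero [DecidableEq V] {α : Type*} [Field α] [CharZero α]
    (hV : Fintype.card V ≠ 1) : ((⊤ : SimpleGraph V).adjMatrix α).det ≠ 0 := by
  rw [Ne, ← exists_mulVec_eq_zero_iff]
  rintro ⟨y, hy, hAy⟩
  have hy_eq (i : V) : y i = ∑ j, y j := by
    have := congrFun hAy i
    rw [adjMatrix_mulVec_apply, neighborFinset_eq_filter] at this
    simp only [top_adj, Finset.filter_ne, Finset.sum_erase_eq_sub (Finset.mem_univ i),
      Pi.zero_apply, sub_eq_zero] at this
    exact this.symm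
  have hsum : ∑ j, y j = 0 := by
    have h : ∑ j, y j = Fintype.card V * ∑ j, y j := by
      conv_lhs => rw [Finset.sum_congr rfl fun i _ ↦ hy_eq i]
      simp
    have hV' : (Fintype.card V : α) - 1 ≠ 0 := sub_ne_zero.mpr (by exact_mod_cast hV)
    refine (mul_eq_zero.mp ?_).resolve_left hV'
    linear_combination -h
  exact hy (funext fun i ↦ (hy_eq i).trans hsum)

variable [DecidableRel G.Adj]

lemma dotProduct_mulVec_adjMatrix_nonpos_of_adj_iff {ι : Type*} [Fintype ι] [DecidableEq ι]
    (f : V → ι) (hG : ∀ u v, G.Adj u v ↔ f u ≠ f v) {x : V → ℝ} (hx : ∑ i, x i = 0) :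
    x ⬝ᵥ G.adjMatrix ℝ *ᵥ x ≤ 0 := by
  have hsame : ∑ i, ∑ j, (if f i = f j then x i * x j else 0) =
      ∑ p, (∑ i, if f i = p then x i else 0) ^ 2 := by
    simp only [sq, Finset.sum_mul_sum, ite_mul, mul_ite, zero_mul, mul_zero]
    conv_rhs => rw [Finset.sum_comm]
    refine Finset.sum_congr rfl fun i _ ↦ ?_
    rw [Finset.sum_comm]
    refine Finset.sum_congr rfl fun j _ ↦ ?_
    simp [eq_comm]
  have hsplit : x ⬝ᵥ G.adjMatrix ℝ *ᵥ x =
      (∑ i, x i) ^ 2 - ∑ p, (∑ i, if f i = p then x i else 0) ^ 2 := by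
    rw [dotProduct_mulVec_adjMatrix, ← hsame, sq, Finset.sum_mul_sum, ← Finset.sum_sub_distrib]
    refine Finset.sum_congr rfl fun i _ ↦ ?_
    rw [← Finset.sum_sub_distrib]
    refine Finset.sum_congr rfl fun j _ ↦ ?_
    by_cases hij : f i = f j <;> simp [hG, hij]
  rw [hsplit, hx]
  have := Finset.sum_nonneg fun p (_ : p ∈ (Finset.univ : Finset ι)) ↦
    sq_nonneg (∑ i, if f i = p then x i else 0)
  linarith

variable [DecidableEq V]

lemma det_adjMatrix_eq_zero_iff_not_injective {ι : Type*} (f : V → ι)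
    (hG : ∀ u v, G.Adj u v ↔ f u ≠ f v) (hV : Fintype.card V ≠ 1) : (G.adjMatrix ℝ).det = 0 ↔ ¬ Function.Injective f := by
  refine ⟨fun hdet hf ↦ ?_, fun hf ↦ ?_⟩
  · obtain rfl : G = ⊤ := by
      ext u v
      simp [hG, hf.ne_iff]
    exact det_adjMatrix_top_ne_zero (α := ℝ) hV (by convert hdet <;> rfl)
  · obtain ⟨u, v, huv, hne⟩ := Function.not_injective_iff.mp hf
    exact det_zero_of_column_eq hne fun w ↦ if_congr (by rw [hG, hG, huv]) rfl rfl

lemma dotProduct_mulVec_adjMatrix_single_add_single {α : Type*} [NonAssocSemiring α] {u v : V}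
    (h : G.Adj u v) :
    (Pi.single u 1 + Pi.single v 1 : V → α) ⬝ᵥ G.adjMatrix α *ᵥ (Pi.single u 1 + Pi.single v 1) =
      2 := by
  simp [add_dotProduct, mulVec_add, h, h.symm, one_add_one_eq_two]

/-- On the span, the form is `2a² + 2(c₁ + c₂)ab + 4b²` with `cᵢ = [wᵢ ~ t] ∈ {0, 1}`. -/
lemma IsPathGraph3Compl.posDefOnSpan {v w₁ w₂ t : V} (h : G.IsPathGraph3Compl v w₁ w₂)
    (hvt : G.Adj v t) :
    (G.adjMatrix ℝ).PosDefOnSpan (Pi.single w₁ 1 + Pi.single w₂ 1)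
      (Pi.single v 2 + Pi.single t 1) := by
  have hw₁ : ¬ G.Adj w₁ v := fun e ↦ h.not_adj_fst e.symm
  have hw₂ : ¬ G.Adj w₂ v := fun e ↦ h.not_adj_snd e.symm
  have hX := dotProduct_mulVec_adjMatrix_single_add_single (α := ℝ) h.adj
  have hY : (Pi.single v 2 + Pi.single t 1 : V → ℝ) ⬝ᵥ G.adjMatrix ℝ *ᵥ
      (Pi.single v 2 + Pi.single t 1) = 4 := by
    simp [add_dotProduct, mulVec_add, hvt, hvt.symm]
    norm_num
  have hXY : (Pi.single w₁ 1 + Pi.single w₂ 1 : V → ℝ) ⬝ᵥ G.adjMatrix ℝ *ᵥ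
      (Pi.single v 2 + Pi.single t 1) + (Pi.single v 2 + Pi.single t 1 : V → ℝ) ⬝ᵥ
      G.adjMatrix ℝ *ᵥ (Pi.single w₁ 1 + Pi.single w₂ 1) =
        2 * ((if G.Adj w₁ t then 1 else 0) + if G.Adj w₂ t then 1 else 0) := by
    simp [add_dotProduct, mulVec_add, hw₁, hw₂, h.not_adj_fst, h.not_adj_snd, G.adj_comm t]
    ring
  intro a b hab
  rw [dotProduct_mulVec_smul_add_smul, hX, hY, hXY]
  have hab' : 0 < a ^ 2 + b ^ 2 := by
    rcases not_and_or.mp (mt Prod.mk_eq_zero.mpr hab) with ha | hb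
    · have := sq_pos_of_ne_zero ha
      positivity
    · have := sq_pos_of_ne_zero hb
      positivity
  split_ifs <;> nlinarith [sq_nonneg (a + b), sq_nonneg a, sq_nonneg b]

lemma exists_eigenvalues_pos_of_adj {u v : V} (h : G.Adj u v) :
    ∃ i, 0 < (G.isHermitian_adjMatrix ℝ).eigenvalues i :=
  (G.isHermitian_adjMatrix ℝ).exists_eigenvalues_pos (x := Pi.single u 1 + Pi.single v 1) <| by
    rw [dotProduct_mulVec_adjMatrix_single_add_single h]
    norm_num

lemma isCompleteMultipartite_of_not_exists_eigenvalues_pos_pair (h : ∀ v, ∃ w, G.Adj v w)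
    (hpos : ¬ ∃ i j, i ≠ j ∧ 0 < (G.isHermitian_adjMatrix ℝ).eigenvalues i ∧
      0 < (G.isHermitian_adjMatrix ℝ).eigenvalues j) :
    G.IsCompleteMultipartite := by
  by_contra hG
  obtain ⟨v, w₁, w₂, hvw⟩ := not_isCompleteMultipartite_iff_exists_isPathGraph3Compl.mp hG
  obtain ⟨t, hvt⟩ := h v
  exact hpos ((G.isHermitian_adjMatrix ℝ).exists_eigenvalues_pos_pair_of_posDefOnSpan
    (hvw.posDefOnSpan hvt))

lemma not_exists_eigenvalues_pos_pair_of_adj_iff {ι : Type*} [Fintype ι] [DecidableEq ι] (f : V → ι)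
    (hG : ∀ u v, G.Adj u v ↔ f u ≠ f v) :
    ¬ ∃ i j, i ≠ j ∧ 0 < (G.isHermitian_adjMatrix ℝ).eigenvalues i ∧
      0 < (G.isHermitian_adjMatrix ℝ).eigenvalues j := by
  rintro ⟨i, j, hij, hi, hj⟩
  refine not_posDefOnSpan_of_nonpos_on_ker (dotProductBilin ℝ ℝ 1)
    (fun z hz ↦ dotProduct_mulVec_adjMatrix_nonpos_of_adj_iff f hG
      (by simpa [one_dotProduct] using hz)) _ _
    ((G.isHermitian_adjMatrix ℝ).posDefOnSpan_eigenvectorBasis hij hi hj)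

end SimpleGraph

lemma eigenvalues_adjMatR {n : ℕ} (G : SimpleGraph (Fin n)) [DecidableRel G.Adj] :
    (adjMatR_isHermitian G).eigenvalues = (G.isHermitian_adjMatrix ℝ).eigenvalues := by
  rw [(adjMatR_isHermitian G).eigenvalues_eq_eigenvalues_iff]
  unfold adjMatR
  congr

lemma eigval_one_mem_iff {n : ℕ} (hn : 2 ≤ n) (G : SimpleGraph (Fin n)) [DecidableRel G.Adj]
    {s : Set ℝ} (hs : IsUpperSet s) :
    eigval G 1 ∈ s ↔ ∃ i j, i ≠ j ∧ (G.isHermitian_adjMatrix ℝ).eigenvalues i ∈ s ∧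
      (G.isHermitian_adjMatrix ℝ).eigenvalues j ∈ s := by
  classical
  have hlen : 2 ≤ ((specMS G).sort (· ≥ ·)).length := by simpa [specMS] using hn
  rw [eigval, ← List.two_le_countP_iff_getD_one_mem hs ((specMS G).pairwise_sort _) hlen,
    ← Multiset.coe_countP, Multiset.sort_eq, specMS, Multiset.countP_map, eigenvalues_adjMatR]
  change 1 < (Finset.univ.filter fun i ↦ _ ∈ s).card ↔ _
  simp only [Finset.one_lt_card, Finset.mem_filter, Finset.mem_univ, true_and]
  exact ⟨fun ⟨i, hi, j, hj, hij⟩ ↦ ⟨i, j, hij, hi, hj⟩,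
    fun ⟨i, j, hij, hi, hj⟩ ↦ ⟨i, hi, j, hj, hij⟩⟩

lemma eigval_one_eq_zero_iff {n : ℕ} (hn : 2 ≤ n) (G : SimpleGraph (Fin n)) [DecidableRel G.Adj] :
    eigval G 1 = 0 ↔
      (∃ i j, i ≠ j ∧ 0 ≤ (G.isHermitian_adjMatrix ℝ).eigenvalues i ∧
        0 ≤ (G.isHermitian_adjMatrix ℝ).eigenvalues j) ∧
      ¬ ∃ i j, i ≠ j ∧ 0 < (G.isHermitian_adjMatrix ℝ).eigenvalues i ∧
        0 < (G.isHermitian_adjMatrix ℝ).eigenvalues j := by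
  have hnonneg := eigval_one_mem_iff hn G (isUpperSet_Ici (0 : ℝ))
  have hpos := eigval_one_mem_iff hn G (isUpperSet_Ioi (0 : ℝ))
  simp only [Set.mem_Ici, Set.mem_Ioi] at hnonneg hpos
  rw [← hnonneg, ← hpos, not_lt, eq_comm, le_antisymm_iff, and_comm]

theorem secondEig_eq_zero_iff (n : ℕ) (hn : 2 ≤ n) (G : SimpleGraph (Fin n))
    (h : ∀ v, ∃ w, G.Adj v w) :
    eigval G 1 = 0 ↔
      ∃ k : ℕ, 2 ≤ k ∧ k ≤ n - 1 ∧ ∃ f : Fin n → Fin k, Function.Surjective f ∧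
        ∀ u v, G.Adj u v ↔ f u ≠ f v := by
  classical
  set hA := G.isHermitian_adjMatrix ℝ
  have hcard : Fintype.card (Fin n) ≠ 1 := by rw [Fintype.card_fin]; omega
  rw [eigval_one_eq_zero_iff hn]
  constructor
  · rintro ⟨⟨i, j, hij, hi, hj⟩, hpos⟩
    obtain ⟨k, f, hf, hGf⟩ :=
      (isCompleteMultipartite_of_not_exists_eigenvalues_pos_pair h hpos).exists_surjective_fin
    have hzero : ∃ i, hA.eigenvalues i = 0 := by
      by_contra! hne
      exact hpos ⟨i, j, hij, hi.lt_of_ne' (hne i), hj.lt_of_ne' (hne j)⟩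
    have hkn : k < n := by
      simpa using hf.card_lt_iff_not_injective.mpr
        ((det_adjMatrix_eq_zero_iff_not_injective f hGf hcard).mp (hA.det_eq_zero_iff.mpr hzero))
    obtain ⟨w, hw⟩ := h ⟨0, by omega⟩
    exact ⟨k, Fin.nontrivial_iff_two_le.mp ⟨_, _, (hGf _ _).mp hw⟩, by omega, f, hf, hGf⟩
  · rintro ⟨k, hk2, hkn, f, hf, hGf⟩
    obtain ⟨i, hi⟩ := hA.det_eq_zero_iff.mp <|
      (det_adjMatrix_eq_zero_iff_not_injective f hGf hcard).mpr <|
        hf.card_lt_iff_not_injective.mp (by simp only [Fintype.card_fin]; omega)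
    obtain ⟨a, ha⟩ := hf ⟨0, by omega⟩
    obtain ⟨b, hb⟩ := hf ⟨1, by omega⟩
    obtain ⟨j, hj⟩ := exists_eigenvalues_pos_of_adj ((hGf a b).mpr (by simp [ha, hb]))
    exact ⟨⟨i, j, fun hij ↦ hj.ne' (hij ▸ hi), hi.ge, hj.le⟩,
      not_exists_eigenvalues_pos_pair_of_adj_iff f hGf⟩
end
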